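/- arXiv:1606.00134 — 4 statements merged into one kernel-verified Lean document; each statement's English description precedes it below -/
import Mathlib

section
/- Let C be a linear [n,k] code over F_q with parity check matrix H (an (n-k)×n matrix of rank n-k whose row space is the dual code C⊥). Then rank(H·Hᵀ) = n - k - dim(C ∩ C⊥). In particular, rank(H·Hᵀ) is independent of the choice of parity check matrix. -/
def dualCode {F : Type*} [Field F] {ι : Type*} [Fintype ι]
    (C : Submodule F (ι → F)) : Submodule F (ι → F) where
  carrier := {v | ∀ w ∈ C, ∑ i, v i * w i = 0}
  add_mem' := by
    intro a b ha hb w hw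
    simp only [Set.mem_setOf_eq] at *
    simp [Pi.add_apply, add_mul, Finset.sum_add_distrib, ha w hw, hb w hw]
  zero_mem' := by intro w hw; simp
  smul_mem' := by
    intro c a ha w hw
    simp only [Set.mem_setOf_eq] at *
    simp [Pi.smul_apply, smul_eq_mul, mul_assoc, ← Finset.mul_sum, ha w hw]

/-!
The dot product is nondegenerate, so `C = (C⊥)⊥ = ker H`. The rows of `H` are independent, so
`Hᵀ` is injective with image `C⊥`; it therefore maps `ker (H * Hᵀ)` isomorphically onto
`C⊥ ⊓ ker H = C ⊓ C⊥`, and rank–nullity for `H * Hᵀ` gives the formula.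
-/

open Module LinearMap

section DualCode

variable {F ι : Type*} [Field F] [Fintype ι]

theorem dualCode_eq_orthogonal (C : Submodule F (ι → F)) :
    dualCode C = BilinForm.orthogonal (dotProductBilin F F) C := by
  ext v
  simp only [BilinForm.mem_orthogonal_iff, dotProductBilin_apply_apply, dotProduct_comm _ v]
  rfl

theorem dotProductBilin_nondegenerate :
    BilinForm.Nondegenerate (dotProductBilin F F : LinearMap.BilinForm F (ι → F)) := by
  classical
  constructor <;> intro v hv <;> funext i <;> simpa using hv (Pi.single i 1)

theorem dotProductBilin_isRefl :
    BilinForm.IsRefl (dotProductBilin F F : LinearMap.BilinForm F (ι → F)) := by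
  intro v w h
  simpa [dotProduct_comm] using h

theorem dualCode_dualCode (C : Submodule F (ι → F)) : dualCode (dualCode C) = C := by
  simp only [dualCode_eq_orthogonal]
  exact BilinForm.orthogonal_orthogonal dotProductBilin_nondegenerate dotProductBilin_isRefl C

theorem mem_dualCode_iff_le_ker (C : Submodule F (ι → F)) (v : ι → F) :
    v ∈ dualCode C ↔ C ≤ ker (dotProductBilin F F v) :=
  Iff.rfl

theorem dualCode_span_rows {m : Type*} (H : Matrix m ι F) :
    dualCode (Submodule.span F (Set.range fun i => H i)) = ker H.mulVecLin := by
  ext v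
  rw [mem_dualCode_iff_le_ker, Submodule.span_le, Set.range_subset_iff, mem_ker, funext_iff]
  simp [Matrix.mulVec, dotProduct_comm v]

end DualCode

theorem LinearMap.finrank_ker_comp_of_injective {K V W U : Type*} [DivisionRing K]
    [AddCommGroup V] [Module K V] [AddCommGroup W] [Module K W] [AddCommGroup U] [Module K U]
    (f : V →ₗ[K] W) (g : W →ₗ[K] U) (hf : Function.Injective f) :
    finrank K (ker (g ∘ₗ f)) = finrank K ↥(range f ⊓ ker g) := by
  rw [ker_comp, (Submodule.equivMapOfInjective f hf _).finrank_eq, Submodule.map_comap_eq]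

theorem Matrix.rank_mul_add_finrank_range_inf_ker {l m n F : Type*} [Field F] [Fintype m]
    [Fintype n] (A : Matrix l m F) (B : Matrix m n F) (hB : Function.Injective B.mulVecLin) :
    (A * B).rank + finrank F ↥(range B.mulVecLin ⊓ ker A.mulVecLin) = Fintype.card n := by
  rw [Matrix.rank, Matrix.mulVecLin_mul, ← finrank_ker_comp_of_injective _ _ hB,
    finrank_range_add_finrank_ker, Module.finrank_fintype_fun_eq_card]

theorem stmt0_general {F : Type*} [Field F] {n k : ℕ}
    (C : Submodule F (Fin n → F))
    (H : Matrix (Fin (n - k)) (Fin n) F)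
    (hind : LinearIndependent F (fun i => H i))
    (hspan : Submodule.span F (Set.range (fun i => H i)) = dualCode C) :
    (H * H.transpose).rank = n - k - Module.finrank F ↥(C ⊓ dualCode C) := by
  have hD : dualCode C = range H.transpose.mulVecLin := by
    rw [← hspan, Matrix.range_mulVecLin]
    rfl
  have hCker : C = ker H.mulVecLin := by
    rw [← dualCode_dualCode C, ← hspan, dualCode_span_rows]
  have hinj : Function.Injective H.transpose.mulVecLin := by
    rw [Matrix.mulVecLin_transpose, Matrix.coe_vecMulLinear]
    exact Matrix.vecMul_injective_iff.mpr hind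
  have hrank := Matrix.rank_mul_add_finrank_range_inf_ker H H.transpose hinj
  rw [Fintype.card_fin] at hrank
  rw [hD, hCker, inf_comm]
  omega

/-- If `H` is a parity check matrix of an `[n,k]` linear code `C` over `F_q` (a full-rank
`(n-k) × n` matrix whose rows form a basis of the Euclidean dual `C⊥`), then
`rank (H * Hᵀ) = n - k - dim (C ⊓ C⊥)`; in particular it does not depend on `H`. -/
theorem stmt0 {F : Type*} [Field F] [Fintype F] {n k : ℕ} (hkn : k ≤ n)
    (C : Submodule F (Fin n → F)) (hC : Module.finrank F C = k)
    (H : Matrix (Fin (n - k)) (Fin n) F)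
    (hind : LinearIndependent F (fun i => H i))
    (hspan : Submodule.span F (Set.range (fun i => H i)) = dualCode C) :
    (H * H.transpose).rank = n - k - Module.finrank F ↥(C ⊓ dualCode C) :=
  stmt0_general C H hind hspan
end

section
/- Let H be a parity check matrix of a linear [n,k] code C over F_q. Then C is an LCD code (i.e., C ∩ C⊥ = {0}) if and only if the (n-k)×(n-k) matrix H·Hᵀ is nonsingular. -/
/-!
The rows of `H` lie in `C⊥` and have rank `n - k`, so a dimension count gives `C = ker H`, while
`C⊥` is the row space `{x H}`. A vector `x H` of the row space lies in `C` iff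
`H (x H)ᵀ = (H Hᵀ) xᵀ = 0`, and `x ↦ x H` is injective, so `C ∩ C⊥` is the image of
`ker (H Hᵀ)` under `x ↦ x H`.
-/

open Module LinearMap

namespace Matrix

variable {F ι m : Type*} [Field F] [Fintype ι] [Fintype m]

theorem mulVec_vecMul_self (H : Matrix m ι F) (x : m → F) : H *ᵥ (x ᵥ* H) = (H * Hᵀ) *ᵥ x := by
  rw [← mulVec_mulVec, mulVec_transpose]

theorem ker_mulVecLin_inf_range_vecMulLinear_eq_bot_iff [DecidableEq m] {H : Matrix m ι F}
    (hH : LinearIndependent F H.row) :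
    ker H.mulVecLin ⊓ range H.vecMulLinear = ⊥ ↔ IsUnit (H * Hᵀ) := by
  have hinj : Function.Injective H.vecMul := vecMul_injective_iff.2 hH
  rw [← mulVec_injective_iff_isUnit, Submodule.eq_bot_iff]
  constructor
  · intro h
    rw [← coe_mulVecLin, injective_iff_map_eq_zero]
    intro x hx
    refine hinj ((h _ ⟨?_, x, rfl⟩).trans (zero_vecMul H).symm)
    rwa [SetLike.mem_coe, mem_ker, mulVecLin_apply, vecMulLinear_apply, mulVec_vecMul_self]
  · rintro h _ ⟨hker, x, rfl⟩
    rw [SetLike.mem_coe, mem_ker, mulVecLin_apply, vecMulLinear_apply, mulVec_vecMul_self] at hker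
    obtain rfl : x = 0 := h (hker.trans (mulVec_zero _).symm)
    exact zero_vecMul H

theorem finrank_ker_mulVecLin_add_card {H : Matrix m ι F} (hH : LinearIndependent F H.row) :
    finrank F (ker H.mulVecLin) + Fintype.card m = Fintype.card ι := by
  have hrank : finrank F (range H.mulVecLin) = Fintype.card m := hH.rank_matrix
  have := finrank_range_add_finrank_ker H.mulVecLin
  rw [finrank_fintype_fun_eq_card] at this
  omega

theorem eq_ker_mulVecLin_of_span_row_eq_dualCode {C : Submodule F (ι → F)} {H : Matrix m ι F}
    (hH : LinearIndependent F H.row) (hspan : Submodule.span F (Set.range H.row) = dualCode C)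
    (hC : finrank F C + Fintype.card m = Fintype.card ι) : C = ker H.mulVecLin := by
  have hle : C ≤ ker H.mulVecLin := fun v hv => by
    ext i
    exact (hspan ▸ Submodule.subset_span ⟨i, rfl⟩ : H i ∈ dualCode C) v hv
  refine Submodule.eq_of_le_of_finrank_eq hle ?_
  have := finrank_ker_mulVecLin_add_card hH
  omega

end Matrix

theorem stmt5_general {F : Type*} [Field F] {n k : ℕ} (hkn : k ≤ n)
    (C : Submodule F (Fin n → F)) (hC : Module.finrank F C = k)
    (H : Matrix (Fin (n - k)) (Fin n) F)
    (hind : LinearIndependent F (fun i => H i))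
    (hspan : Submodule.span F (Set.range (fun i => H i)) = dualCode C) :
    C ⊓ dualCode C = ⊥ ↔ IsUnit (H * H.transpose) := by
  have hCker : C = ker H.mulVecLin :=
    Matrix.eq_ker_mulVecLin_of_span_row_eq_dualCode hind hspan
      (by simp only [hC, Fintype.card_fin]; omega)
  have hdual : dualCode C = range H.vecMulLinear := by
    rw [range_vecMulLinear]
    exact hspan.symm
  rw [hdual, hCker]
  exact Matrix.ker_mulVecLin_inf_range_vecMulLinear_eq_bot_iff hind

/-- Massey's criterion: if `H` is a parity check matrix of an `[n,k]` code `C` over `F_q`,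
then `C` is LCD (i.e. `C ⊓ C⊥ = ⊥`) iff the `(n-k) × (n-k)` matrix `H * Hᵀ` is nonsingular. -/
theorem stmt5 {F : Type*} [Field F] [Fintype F] {n k : ℕ} (hkn : k ≤ n)
    (C : Submodule F (Fin n → F)) (hC : Module.finrank F C = k)
    (H : Matrix (Fin (n - k)) (Fin n) F)
    (hind : LinearIndependent F (fun i => H i))
    (hspan : Submodule.span F (Set.range (fun i => H i)) = dualCode C) :
    C ⊓ dualCode C = ⊥ ↔ IsUnit (H * H.transpose) :=
  stmt5_general hkn C hC H hind hspan
end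

section
/- Let q ≡ 1 (mod 4) be a prime power. Then there exists α ∈ F_q with α² + 1 = 0, and for any k×(n-k) matrix A over F_q, the k×(3n-2k) matrix G' = (I_k | A | αA) satisfies G'·(G')ᵀ = I_k; hence the code generated by G' is LCD. -/
/-- The matrix `(I_k | A | α•A)`. -/
def Gext3 {F : Type*} [Field F] {k m : ℕ} (α : F) (A : Matrix (Fin k) (Fin m) F) :
    Matrix (Fin k) (Fin k ⊕ (Fin m ⊕ Fin m)) F :=
  Matrix.of fun i => Sum.elim (fun j => if i = j then (1 : F) else 0)
    (Sum.elim (A i) (fun j => α * A i j))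

/-- For `q ≡ 1 (mod 4)` there exists `α` with `α² + 1 = 0`, and for every matrix `A`
the matrix `G' = (I_k | A | αA)` satisfies `G' * G'ᵀ = I_k`; hence the code generated
by `G'` is LCD. -/
theorem stmt9 {F : Type*} [Field F] [Fintype F] (h : Fintype.card F % 4 = 1) :
    ∃ α : F, α ^ 2 + 1 = 0 ∧
      ∀ (k m : ℕ) (A : Matrix (Fin k) (Fin m) F),
        Gext3 α A * (Gext3 α A).transpose = 1 ∧
        Submodule.span F (Set.range (fun i => Gext3 α A i)) ⊓
          dualCode (Submodule.span F (Set.range (fun i => Gext3 α A i))) = ⊥ := by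
  obtain ⟨r, hr⟩ := (FiniteField.isSquare_neg_one_iff (F := F)).mpr (by omega)
  have hα : r ^ 2 + 1 = 0 := by rw [sq, ← hr]; ring
  have hsq : r ^ 2 = -1 := by linear_combination hα
  refine ⟨r, hα, fun k m A => ?_⟩
  have hG : Gext3 r A * (Gext3 r A).transpose = 1 := by
    ext i j
    simp only [Matrix.mul_apply, Matrix.transpose_apply, Gext3, Matrix.of_apply,
      Fintype.sum_sum_type, Sum.elim_inl, Sum.elim_inr, Matrix.one_apply]
    have h1 : ∑ l : Fin k, (if i = l then (1:F) else 0) * (if j = l then (1:F) else 0)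
        = if i = j then 1 else 0 := by
      simp [ite_and, Finset.sum_ite_eq, eq_comm]
    have h2 : ∀ t : Fin m, (r * A i t) * (r * A j t) = -(A i t * A j t) := by
      intro t
      have : (r * A i t) * (r * A j t) = r ^ 2 * (A i t * A j t) := by ring
      rw [this, hsq]; ring
    rw [h1]
    simp only [h2, Finset.sum_neg_distrib]
    ring
  refine ⟨hG, ?_⟩
  rw [eq_bot_iff]
  rintro v ⟨hv1, hv2⟩
  obtain ⟨c, rfl⟩ := (Submodule.mem_span_range_iff_exists_fun F).mp hv1
  have key : ∀ i, ∑ j, (∑ l, c l • Gext3 r A l) j * Gext3 r A i j = c i := by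
    intro i
    simp only [Finset.sum_apply, Pi.smul_apply, smul_eq_mul, Finset.sum_mul]
    rw [Finset.sum_comm]
    have hl : ∀ l, ∑ j, c l * Gext3 r A l j * Gext3 r A i j
        = c l * (Gext3 r A * (Gext3 r A).transpose) l i := by
      intro l
      rw [Matrix.mul_apply, Finset.mul_sum]
      simp [Matrix.transpose_apply, mul_assoc]
    simp [hl, hG, Matrix.one_apply, Finset.sum_ite_eq]
  have hc : ∀ i, c i = 0 := by
    intro i
    have := hv2 (Gext3 r A i) (Submodule.subset_span ⟨i, rfl⟩)
    rw [key i] at this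
    exact this
  have : (∑ l, c l • Gext3 r A l) = 0 := by
    simp [hc]
  simp [this, Submodule.mem_bot]
end

section
/- Let q ≡ 3 (mod 4) be a prime power. Then there exist α, β ∈ F_q with α² + β² + 1 = 0, and for any k×(n-k) matrix A over F_q, the k×(4n-3k) matrix G' = (I_k | A | αA | βA) satisfies G'·(G')ᵀ = I_k; hence the code generated by G' is LCD. -/
/-- The matrix `(I_k | A | α•A | β•A)`. -/
def Gext4 {F : Type*} [Field F] {k m : ℕ} (α β : F) (A : Matrix (Fin k) (Fin m) F) :
    Matrix (Fin k) (Fin k ⊕ (Fin m ⊕ (Fin m ⊕ Fin m))) F :=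
  Matrix.of fun i => Sum.elim (fun j => if i = j then (1 : F) else 0)
    (Sum.elim (A i) (Sum.elim (fun j => α * A i j) (fun j => β * A i j)))

lemma gext4_key {F : Type*} [Field F] {k m : ℕ} {α β : F} (hαβ : α ^ 2 + β ^ 2 + 1 = 0)
    (A : Matrix (Fin k) (Fin m) F) (i j : Fin k) :
    ∑ t, Gext4 α β A i t * Gext4 α β A j t = if i = j then 1 else 0 := by
  rw [Fintype.sum_sum_type, Fintype.sum_sum_type, Fintype.sum_sum_type]
  simp only [Gext4, Matrix.of_apply, Sum.elim_inl, Sum.elim_inr]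
  have h1 : ∑ x : Fin k, (if i = x then (1:F) else 0) * (if j = x then 1 else 0)
      = if i = j then 1 else 0 := by
    simp [ite_and, Finset.sum_ite_eq]
  rw [h1]
  have h2 : (∑ x, A i x * A j x) + ((∑ x, α * A i x * (α * A j x))
      + ∑ x, β * A i x * (β * A j x)) = 0 := by
    have e1 : ∀ x, α * A i x * (α * A j x) = α ^ 2 * (A i x * A j x) := fun x => by ring
    have e2 : ∀ x, β * A i x * (β * A j x) = β ^ 2 * (A i x * A j x) := fun x => by ring
    simp only [e1, e2, ← Finset.mul_sum]
    linear_combination (∑ x, A i x * A j x) * hαβ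
  rw [h2, add_zero]

/-- For `q ≡ 3 (mod 4)` there exist `α, β` with `α² + β² + 1 = 0`, and for every matrix
`A` the matrix `G' = (I_k | A | αA | βA)` satisfies `G' * G'ᵀ = I_k`; hence the code
generated by `G'` is LCD. -/
theorem stmt10 {F : Type*} [Field F] [Fintype F] (h : Fintype.card F % 4 = 3) :
    ∃ α β : F, α ^ 2 + β ^ 2 + 1 = 0 ∧
      ∀ (k m : ℕ) (A : Matrix (Fin k) (Fin m) F),
        Gext4 α β A * (Gext4 α β A).transpose = 1 ∧
        Submodule.span F (Set.range (fun i => Gext4 α β A i)) ⊓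
          dualCode (Submodule.span F (Set.range (fun i => Gext4 α β A i))) = ⊥ := by
  haveI : NeZero (ringChar F) := ⟨CharP.ringChar_ne_zero_of_finite F⟩
  obtain ⟨a, b, hab⟩ := CharP.sq_add_sq F (ringChar F) (-1)
  refine ⟨a, b, by push_cast at hab; linear_combination hab, ?_⟩
  set α : F := (a : F)
  set β : F := (b : F)
  have hαβ : α ^ 2 + β ^ 2 + 1 = 0 := by push_cast at hab; linear_combination hab
  intro k m A
  have key := gext4_key hαβ A
  constructor
  · ext i j
    rw [Matrix.mul_apply]
    simp only [Matrix.transpose_apply]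
    rw [key i j]
    simp [Matrix.one_apply]
  · rw [eq_bot_iff]
    intro v hv
    rw [Submodule.mem_inf] at hv
    obtain ⟨c, hc⟩ := (Submodule.mem_span_range_iff_exists_fun F).mp hv.1
    have hcj : ∀ j, c j = 0 := by
      intro j
      have h0 := hv.2 (Gext4 α β A j) (Submodule.subset_span ⟨j, rfl⟩)
      rw [← hc] at h0
      simp only [Finset.sum_apply, Pi.smul_apply, smul_eq_mul, Finset.sum_mul] at h0
      rw [Finset.sum_comm] at h0
      simp only [mul_assoc, ← Finset.mul_sum, key] at h0
      simpa using h0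
    rw [Submodule.mem_bot, ← hc]
    simp [hcj]
end
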